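/- Let G_c be a finite simple graph, i a vertex of G_c, and S a set of vertices with i ∈ S ⊆ N[i]. If S is a feasible set, then for any vertex l ∈ (N[i] \ S), the set S ∪ {l} is also a feasible set. -/

import Mathlib

/-
A maximal independent set through `i` meets `N[i]` only in `i`, so it meets `insert l S ⊆ N[i]`
in exactly one vertex; and every maximal independent set already meets `S`, hence meets the
larger set `insert l S`.
-/

variable {V : Type*} [Fintype V] [DecidableEq V]

/-- `I` is an independent set of `G`: pairwise non-adjacent vertices. -/
def IsIndepF (G : SimpleGraph V) (I : Finset V) : Prop :=
  ∀ a ∈ I, ∀ b ∈ I, ¬ G.Adj a b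

/-- `I` is a maximal independent set of `G`: independent and not a proper
subset of any independent set of `G`. -/
def IsMaxIndepF (G : SimpleGraph V) (I : Finset V) : Prop :=
  IsIndepF G I ∧ ∀ J : Finset V, IsIndepF G J → I ⊆ J → I = J

/-- `S` is a feasible set of `G`: the minimum, over all maximal independent
sets `mis` of `G`, of `|mis ∩ S|` equals `1`. -/
def FeasibleSet (G : SimpleGraph V) (S : Finset V) : Prop :=
  sInf {n : ℕ | ∃ I : Finset V, IsMaxIndepF G I ∧ (I ∩ S).card = n} = 1

open Finset

section

variable {G : SimpleGraph V}

omit [Fintype V] [DecidableEq V] in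
lemma isIndepF_singleton (v : V) : IsIndepF G {v} := by
  simp only [IsIndepF, mem_singleton, forall_eq]
  exact G.irrefl

lemma IsIndepF.exists_isMaxIndepF_superset {I : Finset V} (hI : IsIndepF G I) :
    ∃ J, IsMaxIndepF G J ∧ I ⊆ J := by
  classical
  obtain ⟨J, hJ, hmax⟩ := exists_max_image
    ((univ : Finset V).powerset.filter fun J => IsIndepF G J ∧ I ⊆ J) card ⟨I, by simp [hI]⟩
  simp only [mem_filter, mem_powerset, subset_univ, true_and] at hJ hmax
  exact ⟨J, ⟨hJ.1, fun K hK hJK =>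
    eq_of_subset_of_card_le hJK (hmax K ⟨hK, hJ.2.trans hJK⟩)⟩, hJ.2⟩

lemma IsIndepF.inter_eq_singleton [DecidableRel G.Adj] {I T : Finset V} {i : V}
    (hI : IsIndepF G I) (hiI : i ∈ I) (hiT : i ∈ T) (hT : T ⊆ insert i (G.neighborFinset i)) :
    I ∩ T = {i} := by
  refine eq_singleton_iff_unique_mem.mpr ⟨mem_inter.mpr ⟨hiI, hiT⟩, fun x hx => ?_⟩
  obtain ⟨hxI, hxT⟩ := mem_inter.mp hx
  rcases mem_insert.mp (hT hxT) with rfl | hxi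
  · rfl
  · exact absurd ((G.mem_neighborFinset i x).mp hxi) (hI i hiI x hxI)

omit [Fintype V] in
lemma feasibleSet_iff_isLeast {S : Finset V} :
    FeasibleSet G S ↔ IsLeast {n : ℕ | ∃ I, IsMaxIndepF G I ∧ (I ∩ S).card = n} 1 := by
  refine ⟨fun h => ?_, IsLeast.csInf_eq⟩
  have hne : {n : ℕ | ∃ I, IsMaxIndepF G I ∧ (I ∩ S).card = n}.Nonempty :=
    Set.nonempty_iff_ne_empty.mpr fun he => by simp [FeasibleSet, he] at h
  exact h ▸ isLeast_csInf hne

omit [Fintype V] in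
lemma FeasibleSet.inter_nonempty {S I : Finset V} (hS : FeasibleSet G S)
    (hI : IsMaxIndepF G I) : (I ∩ S).Nonempty :=
  card_pos.mp ((feasibleSet_iff_isLeast.mp hS).2 ⟨I, hI, rfl⟩)

lemma feasibleSet_of_subset_closedNbhd [DecidableRel G.Adj] {T : Finset V} {i : V}
    (hiT : i ∈ T) (hT : T ⊆ insert i (G.neighborFinset i))
    (hmeet : ∀ I, IsMaxIndepF G I → (I ∩ T).Nonempty) : FeasibleSet G T := by
  obtain ⟨J, hJ, hiJ⟩ := (isIndepF_singleton (G := G) i).exists_isMaxIndepF_superset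
  have hJT : J ∩ T = {i} := hJ.1.inter_eq_singleton (singleton_subset_iff.mp hiJ) hiT hT
  refine feasibleSet_iff_isLeast.mpr ⟨⟨J, hJ, by rw [hJT, card_singleton]⟩, ?_⟩
  rintro _ ⟨I, hI, rfl⟩
  exact card_pos.mpr (hmeet I hI)

end

/-- If `i ∈ S ⊆ N[i]` and `S` is a feasible set, then for any vertex
`l ∈ N[i] \ S`, the set `S ∪ {l}` is also a feasible set. -/
theorem feasible_insert (G : SimpleGraph V) [DecidableRel G.Adj]
    (i : V) (S : Finset V) (hiS : i ∈ S)
    (hSN : S ⊆ insert i (G.neighborFinset i))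
    (hS : FeasibleSet G S)
    (l : V) (hl : l ∈ insert i (G.neighborFinset i) \ S) :
    FeasibleSet G (insert l S) :=
  feasibleSet_of_subset_closedNbhd (mem_insert_of_mem hiS)
    (insert_subset (mem_sdiff.mp hl).1 hSN)
    fun _ hI => (hS.inter_nonempty hI).mono (inter_subset_inter_left (subset_insert l S))
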